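/- arXiv:2201.02530 — 3 statements merged into one kernel-verified Lean document; each statement's English description precedes it below -/
import Mathlib

section
/- The function u : ℝ⁶ → ℝ defined by u(x) = 24 / (1 + |x|²)² is positive and satisfies Δu + u² = 0 on all of ℝ⁶ (where Δ is the Euclidean Laplacian); in particular, viewed as a function constant in time, it is a positive eternal solution of u_t = Δu + u². -/
/-!
For a radial function `u x = g ‖x‖²` the chain rule gives
`D²u(x)[v, w] = 2 g'(‖x‖²) ⟪v, w⟫ + 4 g''(‖x‖²) ⟪x, v⟫ ⟪x, w⟫`, so tracing over an orthonormal basis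
of an `n`-dimensional space yields `Δu(x) = 2 n g'(r) + 4 r g''(r)` with `r = ‖x‖²`. For
`g r = 24 / (1 + r)²` and `n = 6` this is `(-576 (1 + r) + 576 r) / (1 + r)⁴ = -(24 / (1 + r)²)²`.
-/

open scoped RealInnerProductSpace
open InnerProductSpace Laplacian Module

section Radial

variable {E : Type*} [NormedAddCommGroup E] [InnerProductSpace ℝ E]

theorem HasDerivAt.hasFDerivAt_comp_norm_sq {g : ℝ → ℝ} {d : ℝ} {x : E}
    (hg : HasDerivAt g d (‖x‖ ^ 2)) :
    HasFDerivAt (fun y : E => g (‖y‖ ^ 2)) ((2 * d) • innerSL ℝ x) x :=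
  (hg.comp_hasFDerivAt x (hasStrictFDerivAt_norm_sq x).hasFDerivAt).congr_fderiv <| by
    rw [mul_comm, mul_smul, ofNat_smul_eq_nsmul ℝ]

theorem fderiv_comp_norm_sq {g g' : ℝ → ℝ} (hg : ∀ t, 0 ≤ t → HasDerivAt g (g' t) t) :
    fderiv ℝ (fun y : E => g (‖y‖ ^ 2)) = fun y => (2 * g' (‖y‖ ^ 2)) • innerSL ℝ y :=
  funext fun y => (hg _ (by positivity)).hasFDerivAt_comp_norm_sq.fderiv

theorem iteratedFDeriv_two_comp_norm_sq {g g' : ℝ → ℝ} {g'' : ℝ} {x : E}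
    (hg : ∀ t, 0 ≤ t → HasDerivAt g (g' t) t) (hg' : HasDerivAt g' g'' (‖x‖ ^ 2)) (v w : E) :
    iteratedFDeriv ℝ 2 (fun y : E => g (‖y‖ ^ 2)) x ![v, w] =
      2 * g' (‖x‖ ^ 2) * ⟪v, w⟫ + 4 * g'' * ⟪x, v⟫ * ⟪x, w⟫ := by
  -- Over `ℝ` the conjugate-linear `innerSL` is linear, which is what `HasFDerivAt.smul` needs.
  let L : E →L[ℝ] E →L[ℝ] ℝ := innerSL ℝ
  have hD : HasFDerivAt (fun y : E => (2 * g' (‖y‖ ^ 2)) • innerSL ℝ y)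
      ((2 * g' (‖x‖ ^ 2)) • L + ((2 * (2 * g'')) • innerSL ℝ x).smulRight (L x)) x :=
    (hg'.const_mul 2).hasFDerivAt_comp_norm_sq.smul L.hasFDerivAt
  have hL (v w : E) : L v w = ⟪v, w⟫ := rfl
  rw [iteratedFDeriv_two_apply, fderiv_comp_norm_sq hg, hD.fderiv]
  simp only [Matrix.cons_val_zero, Matrix.cons_val_one, add_apply, smul_apply,
    ContinuousLinearMap.smulRight_apply, innerSL_apply_apply, smul_eq_mul, hL]
  ring

theorem laplacian_comp_norm_sq [FiniteDimensional ℝ E] {g g' : ℝ → ℝ} {g'' : ℝ} {x : E}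
    (hg : ∀ t, 0 ≤ t → HasDerivAt g (g' t) t) (hg' : HasDerivAt g' g'' (‖x‖ ^ 2)) :
    Δ (fun y : E => g (‖y‖ ^ 2)) x =
      2 * finrank ℝ E * g' (‖x‖ ^ 2) + 4 * ‖x‖ ^ 2 * g'' := by
  have hnorm : ∑ i, ⟪x, stdOrthonormalBasis ℝ E i⟫ ^ 2 = ‖x‖ ^ 2 := by
    simpa only [real_inner_comm x] using (stdOrthonormalBasis ℝ E).sum_sq_inner_right x
  rw [laplacian_eq_iteratedFDeriv_stdOrthonormalBasis]
  simp only [iteratedFDeriv_two_comp_norm_sq hg hg', real_inner_self_eq_norm_sq,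
    OrthonormalBasis.norm_eq_one, one_pow, mul_one, mul_assoc, ← sq, Finset.sum_add_distrib,
    Finset.sum_const, Finset.card_univ, Fintype.card_fin, nsmul_eq_mul, ← Finset.mul_sum, hnorm]
  ring

end Radial

theorem hasDerivAt_const_div_one_add_pow (c : ℝ) (k : ℕ) {t : ℝ} (ht : 1 + t ≠ 0) :
    HasDerivAt (fun s => c / (1 + s) ^ k) (-(c * k) / (1 + t) ^ (k + 1)) t := by
  have := (hasDerivAt_const t c).div (((hasDerivAt_id t).const_add 1).pow k)
    (pow_ne_zero k ht)
  refine this.congr_deriv ?_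
  rcases k with _ | k
  · simp
  · simp only [Pi.pow_apply, id, add_tsub_cancel_right, Nat.cast_add_one]
    field_simp
    ring

theorem laplacian_talenti_add_sq {E : Type*} [NormedAddCommGroup E] [InnerProductSpace ℝ E]
    [FiniteDimensional ℝ E] (hE : finrank ℝ E = 6) (x : E) :
    Δ (fun y : E => (24 / (1 + ‖y‖ ^ 2) ^ 2 : ℝ)) x + (24 / (1 + ‖x‖ ^ 2) ^ 2) ^ 2 = 0 := by
  have hpos (t : ℝ) (ht : 0 ≤ t) : 1 + t ≠ 0 := (add_pos_of_pos_of_nonneg one_pos ht).ne'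
  have hg (t : ℝ) (ht : 0 ≤ t) :
      HasDerivAt (fun s => 24 / (1 + s) ^ 2) (-48 / (1 + t) ^ 3) t := by
    convert hasDerivAt_const_div_one_add_pow 24 2 (hpos t ht) using 1
    norm_num
  have hx := hpos _ (sq_nonneg ‖x‖)
  have hg' : HasDerivAt (fun s => -48 / (1 + s) ^ 3) (144 / (1 + ‖x‖ ^ 2) ^ 4) (‖x‖ ^ 2) := by
    convert hasDerivAt_const_div_one_add_pow (-48) 3 hx using 1
    norm_num
  rw [laplacian_comp_norm_sq hg hg', hE]
  field_simp
  ring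

/-- Talenti's function `u(x) = 24 / (1 + |x|²)²` on `ℝ⁶` is positive and satisfies
`Δu + u² = 0`, where the Euclidean Laplacian is the sum of the six pure second
partial derivatives. -/
theorem stmt0 :
    let u : EuclideanSpace ℝ (Fin 6) → ℝ := fun x => 24 / (1 + ‖x‖ ^ 2) ^ 2
    (∀ x, 0 < u x) ∧
      ∀ x, (∑ i : Fin 6,
          iteratedFDeriv ℝ 2 u x ![EuclideanSpace.single i (1 : ℝ),
            EuclideanSpace.single i (1 : ℝ)]) + (u x) ^ 2 = 0 := by
  intro u
  refine ⟨fun x => by positivity, fun x => ?_⟩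
  have hΔ := congrFun (laplacian_eq_iteratedFDeriv_orthonormalBasis u
    (EuclideanSpace.basisFun (Fin 6) ℝ)) x
  simp only [EuclideanSpace.basisFun_apply] at hΔ
  rw [← hΔ]
  exact laplacian_talenti_add_sq finrank_euclideanSpace_fin x
end

section
/- Let ε > 0, T > 0, and let F : [0, T] → ℝ be a locally Lipschitz function with F(0) = 0 such that for almost every t ∈ (0,T], if F(t) < −1/ε then F is differentiable at t and F'(t) > 0. Then F(t) ≥ −1/ε for every t ∈ [0, T]. -/
/-!
A locally Lipschitz function on `[0, T]` is Lipschitz there, hence absolutely continuous, so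
`F t - F s = ∫ s..t, F'`. If `F t < -1/ε`, let `s < t` be the last time before `t` with
`F s ≥ -1/ε`; on `(s, t]` we have `F < -1/ε`, so `F' > 0` almost everywhere there and
`F t ≥ F s ≥ -1/ε`, a contradiction.
-/

open MeasureTheory Set

theorem AbsolutelyContinuousOnInterval.le_of_ae_deriv_nonneg {f : ℝ → ℝ} {a b : ℝ}
    (hf : AbsolutelyContinuousOnInterval f a b) (hab : a ≤ b)
    (hf' : ∀ᵐ t ∂volume.restrict (Ioc a b), 0 ≤ deriv f t) : f a ≤ f b := by
  have hint : 0 ≤ ∫ t in a..b, deriv f t := by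
    rw [intervalIntegral.integral_of_le hab]
    exact setIntegral_nonneg_of_ae_restrict hf'
  rw [hf.integral_deriv_eq_sub] at hint
  linarith

theorem ContinuousOn.exists_last_ge_of_lt {f : ℝ → ℝ} {a b c : ℝ}
    (hf : ContinuousOn f (Icc a b)) (hab : a ≤ b) (ha : c ≤ f a) (hb : f b < c) :
    ∃ s ∈ Ico a b, c ≤ f s ∧ ∀ t ∈ Ioc s b, f t < c := by
  have hclosed : IsClosed (Icc a b ∩ f ⁻¹' Ici c) :=
    hf.preimage_isClosed_of_isClosed isClosed_Icc isClosed_Ici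
  obtain ⟨s, ⟨hs, hcs⟩, hmax⟩ := (isCompact_Icc.of_isClosed_subset hclosed
    inter_subset_left).exists_isGreatest ⟨a, left_mem_Icc.2 hab, ha⟩
  have hsb : s < b := hs.2.lt_of_ne fun h => (h ▸ hb).not_ge hcs
  refine ⟨s, ⟨hs.1, hsb⟩, hcs, fun t ht => ?_⟩
  by_contra! hct
  exact ht.1.not_ge (hmax ⟨⟨hs.1.trans ht.1.le, ht.2⟩, hct⟩)

theorem LocallyLipschitzOn.ge_of_ae_deriv_nonneg_of_lt {f : ℝ → ℝ} {a b c : ℝ}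
    (hf : LocallyLipschitzOn (Icc a b) f) (ha : c ≤ f a)
    (hf' : ∀ᵐ t ∂volume.restrict (Ioc a b), f t < c → 0 ≤ deriv f t) :
    ∀ t ∈ Icc a b, c ≤ f t := by
  obtain ⟨K, hK⟩ := hf.exists_lipschitzOnWith_of_compact isCompact_Icc
  intro t ht
  by_contra! hft
  obtain ⟨s, hs, hcs, hlt⟩ :=
    (hK.continuousOn.mono (Icc_subset_Icc_right ht.2)).exists_last_ge_of_lt ht.1 ha hft
  have hsub : Icc s t ⊆ Icc a b := Icc_subset_Icc hs.1 ht.2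
  have hac : AbsolutelyContinuousOnInterval f s t :=
    (hK.mono (by rwa [uIcc_of_le hs.2.le])).absolutelyContinuousOnInterval
  have hmono : ∀ᵐ u ∂volume.restrict (Ioc s t), 0 ≤ deriv f u := by
    filter_upwards [ae_restrict_of_ae_restrict_of_subset (Ioc_subset_Ioc hs.1 ht.2) hf',
      ae_restrict_mem measurableSet_Ioc] with u hu hmem using hu (hlt u hmem)
  linarith [hac.le_of_ae_deriv_nonneg hs.2.le hmono]

theorem stmt13_general (ε T : ℝ) (hε : 0 < ε) (F : ℝ → ℝ)
    (hlip : LocallyLipschitzOn (Set.Icc 0 T) F) (h0 : F 0 = 0)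
    (hder : ∀ᵐ t ∂(volume.restrict (Set.Ioc 0 T)),
      F t < -1 / ε → DifferentiableAt ℝ F t ∧ 0 < deriv F t) :
    ∀ t ∈ Set.Icc (0 : ℝ) T, -1 / ε ≤ F t := by
  have hc : -1 / ε ≤ F 0 := by
    rw [h0, neg_div]
    exact neg_nonpos.2 (one_div_pos.2 hε).le
  refine hlip.ge_of_ae_deriv_nonneg_of_lt hc ?_
  filter_upwards [hder] with t ht hlt using (ht hlt).2.le

/-- If `F` is locally Lipschitz on `[0,T]` with `F(0) = 0` and, at almost every
`t ∈ (0,T]` where `F(t) < −1/ε`, `F` is differentiable with `F'(t) > 0`, then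
`F ≥ −1/ε` on `[0,T]`. -/
theorem stmt13 (ε T : ℝ) (hε : 0 < ε) (hT : 0 < T) (F : ℝ → ℝ)
    (hlip : LocallyLipschitzOn (Set.Icc 0 T) F) (h0 : F 0 = 0)
    (hder : ∀ᵐ t ∂(volume.restrict (Set.Ioc 0 T)),
      F t < -1 / ε → DifferentiableAt ℝ F t ∧ 0 < deriv F t) :
    ∀ t ∈ Set.Icc (0 : ℝ) T, -1 / ε ≤ F t :=
  stmt13_general ε T hε F hlip h0 hder
end

section
/- Let p > 1, T > 0, and let m : [0,T) → ℝ be a positive locally Lipschitz function satisfying m'(t) ≤ m(t)^p at almost every t, and suppose limsup_{t→T} m(t) = +∞. Then m(t) ≥ ((p−1)(T−t))^(−1/(p−1)) for every t ∈ [0,T). (This is the lower blow-up rate estimate (5.1) for u_max.) -/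
/-!
Substituting `u = m ^ (1 - p)` turns `m' ≤ m ^ p` into `u' ≥ 1 - p` a.e. As `u` is locally
Lipschitz, hence absolutely continuous, this integrates to `u t ≤ u s + (p - 1) (s - t)` for
`t ≤ s < T`; letting `s → T` along times where `m s` is large, so `u s` is small, gives
`m t ^ (1 - p) ≤ (p - 1) (T - t)`.
-/

open MeasureTheory Set Filter Topology

lemma LocallyLipschitzOn.comp {α β γ : Type*} [PseudoEMetricSpace α] [PseudoEMetricSpace β]
    [PseudoEMetricSpace γ] {f : β → γ} {g : α → β} {s : Set α} {t : Set β}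
    (hf : LocallyLipschitzOn t f) (hg : LocallyLipschitzOn s g) (hst : MapsTo g s t) :
    LocallyLipschitzOn s (f ∘ g) := by
  intro x hx
  obtain ⟨Kg, u, hu, hgu⟩ := hg hx
  obtain ⟨Kf, v, hv, hfv⟩ := hf (hst hx)
  have hgv : g ⁻¹' v ∈ 𝓝[s] x := (hg.continuousOn x hx).tendsto_nhdsWithin hst hv
  exact ⟨Kf * Kg, u ∩ g ⁻¹' v, inter_mem hu hgv,
    hfv.comp (hgu.mono inter_subset_left) ((mapsTo_preimage g v).mono_left inter_subset_right)⟩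

lemma Real.locallyLipschitzOn_rpow_const (r : ℝ) : LocallyLipschitzOn (Ioi 0) fun x : ℝ ↦ x ^ r :=
  ContDiffOn.locallyLipschitzOn (convex_Ioi 0) fun _ hx ↦
    (Real.contDiffAt_rpow_const_of_ne (ne_of_gt hx)).contDiffWithinAt

lemma LocallyLipschitzOn.absolutelyContinuousOnInterval {X : Type*} [PseudoMetricSpace X]
    {f : ℝ → X} {s : Set ℝ} {a b : ℝ} (hf : LocallyLipschitzOn s f) (hab : uIcc a b ⊆ s) :
    AbsolutelyContinuousOnInterval f a b :=
  have ⟨_, hK⟩ := (hf.mono hab).exists_lipschitzOnWith_of_compact isCompact_uIcc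
  hK.absolutelyContinuousOnInterval

lemma AbsolutelyContinuousOnInterval.mul_sub_le_sub_of_ae_le_deriv {f : ℝ → ℝ} {a b C : ℝ}
    (hf : AbsolutelyContinuousOnInterval f a b) (hab : a ≤ b)
    (hC : ∀ᵐ x ∂volume.restrict (Icc a b), C ≤ deriv f x) :
    C * (b - a) ≤ f b - f a := by
  rw [← hf.integral_deriv_eq_sub, mul_comm, ← smul_eq_mul, ← intervalIntegral.integral_const]
  exact intervalIntegral.integral_mono_ae_restrict hab intervalIntegrable_const
    hf.intervalIntegrable_deriv hC

lemma one_sub_le_deriv_rpow_one_sub {f : ℝ → ℝ} {x p : ℝ} (hp : 1 ≤ p) (hfx : 0 < f x)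
    (hdf : DifferentiableAt ℝ f x) (hf' : deriv f x ≤ f x ^ p) :
    1 - p ≤ deriv (fun y ↦ f y ^ (1 - p)) x := by
  rw [(hdf.hasDerivAt.rpow_const (Or.inl hfx.ne')).deriv]
  have hcancel : f x ^ (1 - p - 1) * f x ^ p = 1 := by
    rw [← Real.rpow_add hfx, show 1 - p - 1 + p = (0 : ℝ) by ring, Real.rpow_zero]
  calc 1 - p = f x ^ p * (1 - p) * f x ^ (1 - p - 1) := by linear_combination (p - 1) * hcancel
    _ ≤ deriv f x * (1 - p) * f x ^ (1 - p - 1) := by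
      gcongr ?_ * _
      exact mul_le_mul_of_nonpos_right hf' (by linarith)

lemma le_mul_sub_of_frequently_lt {u : ℝ → ℝ} {c t T : ℝ} (hc : 0 ≤ c) (htT : t < T)
    (hu : ∀ s ∈ Ioo t T, u t ≤ u s + c * (s - t))
    (hsmall : ∀ ε > 0, ∃ᶠ s in 𝓝[<] T, u s < ε) :
    u t ≤ c * (T - t) := by
  refine le_of_forall_pos_lt_add fun ε hε ↦ ?_
  obtain ⟨s, hus, hst, hsT⟩ := ((hsmall ε hε).and_eventually (Ioo_mem_nhdsLT htT)).exists
  have : c * (s - t) ≤ c * (T - t) := by gcongr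
  linarith [hu s ⟨hst, hsT⟩]

theorem stmt18_general (p T : ℝ) (hp : 1 < p) (m : ℝ → ℝ)
    (hpos : ∀ t, 0 ≤ t → t < T → 0 < m t)
    (hlip : LocallyLipschitzOn (Set.Ico 0 T) m)
    (hderiv : ∀ᵐ t ∂(volume.restrict (Set.Ico 0 T)),
      DifferentiableAt ℝ m t ∧ deriv m t ≤ m t ^ p)
    (hblow : ∀ M : ℝ, ∃ᶠ t in nhdsWithin T (Set.Iio T), M < m t) :
    ∀ t, 0 ≤ t → t < T → ((p - 1) * (T - t)) ^ (-(1 : ℝ) / (p - 1)) ≤ m t := by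
  intro t ht htT
  have hp' : 1 - p < 0 := by linarith
  have hmpos : MapsTo m (Ico 0 T) (Ioi 0) := fun x hx ↦ hpos x hx.1 hx.2
  have hu : LocallyLipschitzOn (Ico 0 T) (fun x ↦ m x ^ (1 - p)) :=
    (Real.locallyLipschitzOn_rpow_const _).comp hlip hmpos
  have hslope : ∀ s ∈ Ioo t T, m t ^ (1 - p) ≤ m s ^ (1 - p) + (p - 1) * (s - t) := by
    rintro s ⟨hts, hsT⟩
    have hsub : Icc t s ⊆ Ico 0 T := Icc_subset_Ico ht hsT
    have := (hu.absolutelyContinuousOnInterval ((uIcc_of_le hts.le).symm ▸ hsub))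
      |>.mul_sub_le_sub_of_ae_le_deriv hts.le <| by
        filter_upwards [ae_restrict_of_ae_restrict_of_subset hsub hderiv,
          ae_restrict_mem measurableSet_Icc] with x hx hxI
        exact one_sub_le_deriv_rpow_one_sub hp.le (hmpos (hsub hxI)) hx.1 hx.2
    linarith
  have hsmall : ∀ ε > 0, ∃ᶠ s in 𝓝[<] T, m s ^ (1 - p) < ε := fun ε hε ↦
    ((hblow (ε ^ (1 - p)⁻¹)).and_eventually (Ioo_mem_nhdsLT htT)).mono fun s ⟨hs, hst, hsT⟩ ↦
      (Real.rpow_inv_lt_iff_of_neg hε (hmpos ⟨ht.trans hst.le, hsT⟩) hp').1 hs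
  have hbound := le_mul_sub_of_frequently_lt (by linarith) htT hslope hsmall
  have hTt : 0 < (p - 1) * (T - t) := mul_pos (by linarith) (by linarith)
  rwa [show -(1 : ℝ) / (p - 1) = (1 - p)⁻¹ by rw [neg_div, one_div, ← inv_neg, neg_sub],
    Real.rpow_inv_le_iff_of_neg hTt (hmpos ⟨ht, htT⟩) hp']

/-- Lower blow-up rate: if `m > 0` is locally Lipschitz on `[0,T)`, satisfies
`m' ≤ m^p` almost everywhere, and `limsup_{t→T} m(t) = +∞`, then
`m(t) ≥ ((p−1)(T−t))^(−1/(p−1))` on `[0,T)`. -/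
theorem stmt18 (p T : ℝ) (hp : 1 < p) (hT : 0 < T) (m : ℝ → ℝ)
    (hpos : ∀ t, 0 ≤ t → t < T → 0 < m t)
    (hlip : LocallyLipschitzOn (Set.Ico 0 T) m)
    (hderiv : ∀ᵐ t ∂(volume.restrict (Set.Ico 0 T)),
      DifferentiableAt ℝ m t ∧ deriv m t ≤ m t ^ p)
    (hblow : ∀ M : ℝ, ∃ᶠ t in nhdsWithin T (Set.Iio T), M < m t) :
    ∀ t, 0 ≤ t → t < T → ((p - 1) * (T - t)) ^ (-(1 : ℝ) / (p - 1)) ≤ m t :=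
  stmt18_general p T hp m hpos hlip hderiv hblow
end
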